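/- arXiv:2107.06952 — 3 statements merged into one kernel-verified Lean document; each statement's English description precedes it below -/
import Mathlib

section
/- Let m and k be positive integers with 0 ≤ k ≤ 2^m − 1, and let X and Y be head/tail strings each of length less than m. The number of ordered pairs (A_1, A_2) of head/tail strings of length m such that X is a prefix of A_1, Y is a suffix of A_2, and C(A_2, A_1) = k, is equal to the number of head/tail strings A of length 2m such that X is a prefix of A, Y is a suffix of A, and the autocorrelation C(A,A) is congruent to k modulo 2^m. -/
/-- The Conway number (correlation) `C(A,B)` of two head/tail strings of length `n`,
encoded as functions `Fin n → Bool` (with `H = true`, `T = false`, and 0-indexed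
positions): `C(A,B) = ∑_{i=1}^n δ_i 2^{n-i}` where `δ_i = 1` iff `a_{i+j} = b_{1+j}`
for all `j = 0,…,n-i`. -/
def conway {n : ℕ} (A B : Fin n → Bool) : ℕ :=
  ∑ i : Fin n,
    if (∀ j : Fin n, (i : ℕ) + (j : ℕ) < n → A (i + j) = B j) then 2 ^ (n - 1 - (i : ℕ)) else 0

/-!
Concatenation `(A₁, A₂) ↦ A₁A₂` is a bijection onto strings of length `2m` which respects the
prefix and suffix conditions. In the autocorrelation of `A₁A₂` the shifts `i < m` carry weights
`2^(2m-1-i)` divisible by `2^m`, while the shift `m + s` compares `A₂` shifted by `s` with `A₁`,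
contributing exactly the `s`-th term of `C(A₂, A₁)`. Hence `C(A₁A₂, A₁A₂) ≡ C(A₂, A₁) [MOD 2^m]`,
and as both `C(A₂, A₁)` and `k` are below `2^m`, the congruence is an equality.
-/

def conwayTerm {n : ℕ} (A B : Fin n → Bool) (i : Fin n) : ℕ :=
  if (∀ j : Fin n, (i : ℕ) + (j : ℕ) < n → A (i + j) = B j) then 2 ^ (n - 1 - (i : ℕ)) else 0

theorem conway_eq_sum_conwayTerm {n : ℕ} (A B : Fin n → Bool) :
    conway A B = ∑ i, conwayTerm A B i :=
  rfl

theorem pow_dvd_conwayTerm {n : ℕ} (A B : Fin n → Bool) (i : Fin n) :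
    2 ^ (n - 1 - (i : ℕ)) ∣ conwayTerm A B i := by
  unfold conwayTerm
  split
  · exact dvd_rfl
  · exact dvd_zero _

theorem conway_lt {n : ℕ} (A B : Fin n → Bool) : conway A B < 2 ^ n :=
  calc conway A B ≤ ∑ i : Fin n, 2 ^ (n - 1 - (i : ℕ)) :=
        Finset.sum_le_sum fun i _ => by split <;> simp
    _ = ∑ k ∈ Finset.range n, 2 ^ k := by
        rw [Fin.sum_univ_eq_sum_range (fun i => 2 ^ (n - 1 - i)), Finset.sum_range_reflect]
    _ < 2 ^ n := Nat.geomSum_lt le_rfl fun k hk => Finset.mem_range.1 hk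

theorem conway_comp_cast {n n' : ℕ} (h : n = n') (A B : Fin n' → Bool) :
    conway (A ∘ Fin.cast h) (B ∘ Fin.cast h) = conway A B := by
  subst h
  rfl

theorem Fin.natAdd_add_castAdd {m : ℕ} {s j : Fin m} (h : (s : ℕ) + j < m) :
    Fin.natAdd m s + Fin.castAdd m j = Fin.natAdd m (s + j) := by
  ext
  rw [Fin.val_add_eq_of_add_lt] <;>
    simp only [Fin.val_natAdd, Fin.val_castAdd, Fin.val_add_eq_of_add_lt h] <;> omega

theorem Fin.append_shift_agree_iff {α : Type*} {m : ℕ} (A₁ A₂ : Fin m → α) (s : Fin m) :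
    (∀ j : Fin (m + m), (Fin.natAdd m s : ℕ) + j < m + m →
        Fin.append A₁ A₂ (Fin.natAdd m s + j) = Fin.append A₁ A₂ j) ↔
      ∀ j : Fin m, (s : ℕ) + j < m → A₂ (s + j) = A₁ j := by
  constructor
  · intro h j hj
    have := h (Fin.castAdd m j) (by simp only [Fin.val_natAdd, Fin.val_castAdd]; omega)
    rwa [Fin.natAdd_add_castAdd hj, Fin.append_right, Fin.append_left] at this
  · intro h j hj
    induction j using Fin.addCases with
    | left j =>
      have hj' : (s : ℕ) + j < m := by simp only [Fin.val_natAdd, Fin.val_castAdd] at hj; omega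
      rw [Fin.natAdd_add_castAdd hj', Fin.append_right, Fin.append_left]
      exact h j hj'
    | right j => simp only [Fin.val_natAdd] at hj; omega

theorem conwayTerm_append_natAdd {m : ℕ} (A₁ A₂ : Fin m → Bool) (s : Fin m) :
    conwayTerm (Fin.append A₁ A₂) (Fin.append A₁ A₂) (Fin.natAdd m s) = conwayTerm A₂ A₁ s := by
  unfold conwayTerm
  rw [if_congr (Fin.append_shift_agree_iff A₁ A₂ s) rfl rfl, Fin.val_natAdd]
  congr 2
  omega

theorem conway_append_self_modEq {m : ℕ} (A₁ A₂ : Fin m → Bool) :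
    conway (Fin.append A₁ A₂) (Fin.append A₁ A₂) ≡ conway A₂ A₁ [MOD 2 ^ m] := by
  have hlow : 2 ^ m ∣ ∑ i : Fin m,
      conwayTerm (Fin.append A₁ A₂) (Fin.append A₁ A₂) (Fin.castAdd m i) :=
    Finset.dvd_sum fun i _ =>
      (pow_dvd_pow 2 (by simp only [Fin.val_castAdd]; omega)).trans (pow_dvd_conwayTerm _ _ _)
  rw [conway_eq_sum_conwayTerm, Fin.sum_univ_add]
  simp only [conwayTerm_append_natAdd, ← conway_eq_sum_conwayTerm]
  simpa using (Nat.modEq_zero_iff_dvd.2 hlow).add_right (conway A₂ A₁)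

def appendEquivTwoMul (α : Type*) (m : ℕ) : (Fin m → α) × (Fin m → α) ≃ (Fin (2 * m) → α) :=
  (Fin.appendEquiv m m).trans ((finCongr (two_mul m).symm).arrowCongr (Equiv.refl α))

section appendEquivTwoMul

variable {α : Type*} {m : ℕ} (P : (Fin m → α) × (Fin m → α))

theorem appendEquivTwoMul_apply :
    appendEquivTwoMul α m P = Fin.append P.1 P.2 ∘ Fin.cast (two_mul m) :=
  rfl

theorem appendEquivTwoMul_apply_of_lt (i : ℕ) (h : i < m) :
    appendEquivTwoMul α m P ⟨i, by omega⟩ = P.1 ⟨i, h⟩ :=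
  Fin.append_left P.1 P.2 ⟨i, h⟩

theorem appendEquivTwoMul_apply_add (i : ℕ) (h : i < m) :
    appendEquivTwoMul α m P ⟨m + i, by omega⟩ = P.2 ⟨i, h⟩ :=
  Fin.append_right P.1 P.2 ⟨i, h⟩

end appendEquivTwoMul

theorem conway_appendEquivTwoMul_modEq {m : ℕ} (P : (Fin m → Bool) × (Fin m → Bool)) :
    conway (appendEquivTwoMul Bool m P) (appendEquivTwoMul Bool m P) ≡ conway P.2 P.1
      [MOD 2 ^ m] := by
  rw [appendEquivTwoMul_apply, conway_comp_cast]
  exact conway_append_self_modEq P.1 P.2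

/-- Refined version with a prescribed prefix `X` and suffix `Y`: the number of ordered
pairs `(A₁, A₂)` of strings of length `m` such that `X` is a prefix of `A₁`, `Y` is a
suffix of `A₂`, and `C(A₂, A₁) = k`, equals the number of strings `A` of length `2m`
with prefix `X`, suffix `Y`, and autocorrelation congruent to `k` modulo `2^m`. -/
theorem card_pairs_eq_card_autocorr_prefix_suffix (m p q k : ℕ)
    (hp : p < m) (hq : q < m) (X : Fin p → Bool) (Y : Fin q → Bool)
    (hk2 : k ≤ 2 ^ m - 1) :
    Fintype.card {P : (Fin m → Bool) × (Fin m → Bool) //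
        (∀ i : Fin p, P.1 ⟨i, lt_trans i.isLt hp⟩ = X i) ∧
        (∀ i : Fin q, P.2 ⟨m - q + i, by have := i.isLt; omega⟩ = Y i) ∧
        conway P.2 P.1 = k} =
      Fintype.card {A : Fin (2 * m) → Bool //
        (∀ i : Fin p, A ⟨i, by have := i.isLt; omega⟩ = X i) ∧
        (∀ i : Fin q, A ⟨2 * m - q + i, by have := i.isLt; omega⟩ = Y i) ∧
        conway A A ≡ k [MOD 2 ^ m]} := by
  refine Fintype.card_congr (Equiv.subtypeEquiv (appendEquivTwoMul Bool m) fun P => ?_)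
  have hk : k < 2 ^ m := by have := Nat.one_le_two_pow (n := m); omega
  refine and_congr (forall_congr' fun i => ?_) (and_congr (forall_congr' fun i => ?_) ?_)
  · rw [appendEquivTwoMul_apply_of_lt P i (lt_trans i.isLt hp)]
  · have hi : 2 * m - q + i = m + (m - q + i) := by omega
    simp only [hi, appendEquivTwoMul_apply_add P (m - q + i) (by omega)]
  · have hcong := conway_appendEquivTwoMul_modEq P
    exact ⟨fun h => h ▸ hcong, fun h => (hcong.symm.trans h).eq_of_lt_of_lt (conway_lt _ _) hk⟩
end

section
/- For every integer n ≥ 5, the numbers c_n satisfy 2^{n−6} ≤ c_n ≤ 2^{n−4}. -/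
/-- `cstar m` is the number of head/tail strings of length `m` beginning with `HT`,
ending with `TH`, whose autocorrelation is `2^{m-1} + 1`. -/
def cstar (m : ℕ) : ℕ :=
  Fintype.card {A : Fin m → Bool //
    (∀ i : Fin m, (i : ℕ) = 0 → A i = true) ∧
    (∀ i : Fin m, (i : ℕ) = 1 → A i = false) ∧
    (∀ i : Fin m, (i : ℕ) = m - 2 → A i = false) ∧
    (∀ i : Fin m, (i : ℕ) = m - 1 → A i = true) ∧
    conway A A = 2 ^ (m - 1) + 1}

/-- `c n = 2 * cstar (n-1)`: by Csirik's characterization, the number of optimal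
strategies for Player I in the Penney-Ante game with strings of length `n`. -/
def c (n : ℕ) : ℕ := 2 * cstar (n - 1)

open Finset

/-! ### Auxiliary definitions -/

/-- `A` has period `s` (as far as it is defined). -/
def per {m : ℕ} (A : Fin m → Bool) (s : ℕ) : Prop :=
  ∀ k : Fin m, (h : s + (k : ℕ) < m) → A ⟨s + (k : ℕ), h⟩ = A k

instance {m : ℕ} (A : Fin m → Bool) (s : ℕ) : Decidable (per A s) := by
  unfold per; infer_instance

/-- the boundary conditions -/
def bd (m : ℕ) (A : Fin m → Bool) : Prop :=
  (∀ i : Fin m, (i : ℕ) = 0 → A i = true) ∧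
  (∀ i : Fin m, (i : ℕ) = 1 → A i = false) ∧
  (∀ i : Fin m, (i : ℕ) = m - 2 → A i = false) ∧
  (∀ i : Fin m, (i : ℕ) = m - 1 → A i = true)

instance (m : ℕ) (A : Fin m → Bool) : Decidable (bd m A) := by unfold bd; infer_instance

/-- the full predicate counted by `cstar` -/
def csP (m : ℕ) (A : Fin m → Bool) : Prop :=
  (∀ i : Fin m, (i : ℕ) = 0 → A i = true) ∧
  (∀ i : Fin m, (i : ℕ) = 1 → A i = false) ∧
  (∀ i : Fin m, (i : ℕ) = m - 2 → A i = false) ∧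
  (∀ i : Fin m, (i : ℕ) = m - 1 → A i = true) ∧
  conway A A = 2 ^ (m - 1) + 1

instance (m : ℕ) (A : Fin m → Bool) : Decidable (csP m A) := by unfold csP; infer_instance

/-! ### Basic lemmas about `per` -/

lemma per_apply {m : ℕ} {A : Fin m → Bool} {s : ℕ} (hA : per A s) (k : ℕ)
    (h : s + k < m) : A ⟨s + k, h⟩ = A ⟨k, by omega⟩ :=
  hA ⟨k, by omega⟩ h

lemma per_ext {m : ℕ} {A A' : Fin m → Bool} {s : ℕ} (hs : 0 < s)
    (hA : per A s) (hA' : per A' s)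
    (hfirst : ∀ k, (hk : k < m) → k < s → A ⟨k, hk⟩ = A' ⟨k, hk⟩) : A = A' := by
  funext i
  obtain ⟨k, hk⟩ := i
  induction k using Nat.strong_induction_on with
  | _ k ih =>
    by_cases hks : k < s
    · exact hfirst k hk hks
    · have h1 : s + (k - s) < m := by omega
      have emk : (⟨s + (k - s), h1⟩ : Fin m) = ⟨k, hk⟩ := by ext; simp; omega
      have e1 := per_apply hA (k - s) h1
      have e2 := per_apply hA' (k - s) h1
      rw [emk] at e1 e2
      rw [e1, e2]
      exact ih (k - s) (by omega) (by omega)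

/-- bridge: the conway condition at shift `i` equals `per A i.val` -/
lemma D_iff_per {m : ℕ} (A : Fin m → Bool) (i : Fin m) :
    (∀ j : Fin m, (i : ℕ) + (j : ℕ) < m → A (i + j) = A j) ↔ per A (i : ℕ) := by
  constructor
  · intro h k hk
    have := h k hk
    have e : i + k = (⟨(i : ℕ) + (k : ℕ), hk⟩ : Fin m) := by
      ext; simp [Fin.add_def, Nat.mod_eq_of_lt hk]
    rwa [e] at this
  · intro h j hj
    have := h j hj
    have e : i + j = (⟨(i : ℕ) + (j : ℕ), hj⟩ : Fin m) := by
      ext; simp [Fin.add_def, Nat.mod_eq_of_lt hj]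
    rwa [e]

lemma conway_eq_sum_per {m : ℕ} (A : Fin m → Bool) :
    conway A A = ∑ i : Fin m, if per A (i : ℕ) then 2 ^ (m - 1 - (i : ℕ)) else 0 := by
  unfold conway
  exact Finset.sum_congr rfl fun i _ => by rw [if_congr (D_iff_per A i) rfl rfl]

/-- The key characterization: for a string with matching first and last letters, the
autocorrelation is `2^{m-1}+1` iff there is no nontrivial period. -/
lemma conway_eq_iff {m : ℕ} (hm : 2 ≤ m) (A : Fin m → Bool)
    (h0 : A ⟨0, by omega⟩ = true) (hl : A ⟨m - 1, by omega⟩ = true) :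
    conway A A = 2 ^ (m - 1) + 1 ↔ ∀ s : ℕ, 0 < s → s < m - 1 → ¬ per A s := by
  set f : Fin m → ℕ := fun i => if per A (i : ℕ) then 2 ^ (m - 1 - (i : ℕ)) else 0 with hf
  have hc : conway A A = ∑ i : Fin m, f i := conway_eq_sum_per A
  have hper0 : per A 0 := by
    intro k h
    congr 1
    ext
    simp
  have hf0 : f ⟨0, by omega⟩ = 2 ^ (m - 1) := by
    simp only [hf]
    rw [if_pos]
    · norm_num
    · exact hper0
  have hperl : per A (m - 1) := by
    intro k h
    have hk0 : (k : ℕ) = 0 := by omega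
    have e1 : (⟨m - 1 + (k : ℕ), h⟩ : Fin m) = ⟨m - 1, by omega⟩ := by ext; simp; omega
    have e2 : k = (⟨0, by omega⟩ : Fin m) := by ext; simp [hk0]
    rw [e1, hl]
    exact (by rw [e2, h0] : A k = true).symm
  have hfl : f ⟨m - 1, by omega⟩ = 1 := by
    simp only [hf]
    rw [if_pos]
    · simp
    · exact hperl
  have hne : (⟨0, by omega⟩ : Fin m) ≠ ⟨m - 1, by omega⟩ := by
    intro h; rw [Fin.mk.injEq] at h; omega
  constructor
  · intro hC s hs1 hs2 hper
    have hsm : s < m := by omega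
    have hsum : f ⟨0, by omega⟩ + f ⟨s, hsm⟩ ≤ ∑ i : Fin m, f i := by
      rw [← Finset.sum_pair (a := (⟨0, by omega⟩ : Fin m)) (b := ⟨s, hsm⟩)
        (by intro h; rw [Fin.mk.injEq] at h; omega)]
      exact Finset.sum_le_sum_of_subset (Finset.subset_univ _)
    have hfs : f ⟨s, hsm⟩ = 2 ^ (m - 1 - s) := by
      simp only [hf]; rw [if_pos hper]
    have h2 : 2 ≤ 2 ^ (m - 1 - s) := by
      calc 2 = 2 ^ 1 := by norm_num
      _ ≤ 2 ^ (m - 1 - s) := Nat.pow_le_pow_right (by norm_num) (by omega)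
    rw [hc] at hC
    rw [hf0, hfs] at hsum
    omega
  · intro hnoper
    rw [hc]
    have : ∑ i : Fin m, f i = ∑ i ∈ ({⟨0, by omega⟩, ⟨m - 1, by omega⟩} : Finset (Fin m)), f i := by
      symm
      apply Finset.sum_subset (Finset.subset_univ _)
      intro x _ hx
      simp only [Finset.mem_insert, Finset.mem_singleton] at hx
      push_neg at hx
      obtain ⟨hx0, hxl⟩ := hx
      have hx0' : (x : ℕ) ≠ 0 := fun h => hx0 (by ext; simp [h])
      have hxl' : (x : ℕ) ≠ m - 1 := fun h => hxl (by ext; simp [h])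
      simp only [hf]
      rw [if_neg]
      exact hnoper (x : ℕ) (by omega) (by omega)
    rw [this, Finset.sum_pair hne, hf0, hfl]

/-! ### `cstar` as a filter cardinality -/

lemma cstar_eq (m : ℕ) :
    cstar m = (Finset.univ.filter (fun A : Fin m → Bool => csP m A)).card := by
  rw [cstar]
  rw [show (Finset.univ.filter (fun A : Fin m → Bool => csP m A)).card
      = Fintype.card {A : Fin m → Bool // csP m A} from (Fintype.card_subtype _).symm]
  apply Fintype.card_congr
  apply Equiv.subtypeEquivRight
  intro A
  unfold csP
  tauto

/-! ### Upper bound -/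

lemma card_bd_le (m : ℕ) (hm : 4 ≤ m) :
    (Finset.univ.filter (fun A : Fin m → Bool => bd m A)).card ≤ 2 ^ (m - 4) := by
  have hinj : Set.InjOn
      (fun A : Fin m → Bool => (fun k : Fin (m - 4) => A ⟨(k : ℕ) + 2, by omega⟩))
      ↑(Finset.univ.filter (fun A : Fin m → Bool => bd m A)) := by
    intro A hA B hB hAB
    simp only [Finset.coe_filter, Set.mem_setOf_eq, Finset.mem_univ, true_and] at hA hB
    funext i
    obtain ⟨v, hv⟩ := i
    rcases Nat.lt_or_ge v 2 with h2 | h2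
    · rcases Nat.lt_or_ge v 1 with h1 | h1
      · rw [hA.1 _ (by omega : v = 0), hB.1 _ (by omega : v = 0)]
      · rw [hA.2.1 _ (by omega : v = 1), hB.2.1 _ (by omega : v = 1)]
    · rcases Nat.lt_or_ge v (m - 2) with h3 | h3
      · rcases Nat.lt_or_ge v (m - 3 + 1) with h4 | h4
        · have hv4 : v - 2 < m - 4 := by omega
          have := congrFun hAB ⟨v - 2, hv4⟩
          simp only at this
          convert this using 2 <;> (ext; simp; omega)
        · omega
      · rcases Nat.lt_or_ge v (m - 1) with h4 | h4
        · rw [hA.2.2.1 _ (by omega : v = m - 2), hB.2.2.1 _ (by omega : v = m - 2)]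
        · rw [hA.2.2.2 _ (by omega : v = m - 1), hB.2.2.2 _ (by omega : v = m - 1)]
  have h := Finset.card_le_card_of_injOn _ (fun a _ =>
    Finset.mem_univ ((fun A : Fin m → Bool =>
      (fun k : Fin (m - 4) => A ⟨(k : ℕ) + 2, by omega⟩)) a)) hinj
  refine le_trans h (le_of_eq ?_)
  simp

lemma cstar_le (m : ℕ) (hm : 4 ≤ m) : cstar m ≤ 2 ^ (m - 4) := by
  rw [cstar_eq]
  refine le_trans (Finset.card_le_card ?_) (card_bd_le m hm)
  intro A hA
  simp only [Finset.mem_filter, Finset.mem_univ, true_and] at *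
  obtain ⟨h1, h2, h3, h4, h5⟩ := hA
  exact ⟨h1, h2, h3, h4⟩

/-! ### Lower bound: counting -/

lemma card_bd_ge (m : ℕ) (hm : 4 ≤ m) :
    2 ^ (m - 4) ≤ (Finset.univ.filter (fun A : Fin m → Bool => bd m A)).card := by
  set g : (Fin (m - 4) → Bool) → (Fin m → Bool) := fun w i =>
    if h : 2 ≤ (i : ℕ) ∧ (i : ℕ) < m - 2 then w ⟨(i : ℕ) - 2, by omega⟩
    else decide ((i : ℕ) = 0 ∨ (i : ℕ) = m - 1) with hg
  have hmem : ∀ w, g w ∈ Finset.univ.filter (fun A : Fin m → Bool => bd m A) := by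
    intro w
    simp only [Finset.mem_filter, Finset.mem_univ, true_and]
    refine ⟨?_, ?_, ?_, ?_⟩ <;> intro i hi <;> simp only [hg] <;>
      rw [dif_neg (by omega)] <;> simp [hi] <;> omega
  have hval : ∀ (w : Fin (m - 4) → Bool) (k : Fin (m - 4)),
      g w ⟨(k : ℕ) + 2, by omega⟩ = w k := by
    intro w k
    have hk := k.isLt
    simp only [hg]
    rw [dif_pos (show 2 ≤ (k : ℕ) + 2 ∧ (k : ℕ) + 2 < m - 2 by omega)]
    congr 1
  have hinj : Set.InjOn g ↑(Finset.univ : Finset (Fin (m - 4) → Bool)) := by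
    intro w _ w' _ h
    funext k
    calc w k = g w ⟨(k : ℕ) + 2, by omega⟩ := (hval w k).symm
      _ = g w' ⟨(k : ℕ) + 2, by omega⟩ := congrFun h _
      _ = w' k := hval w' k
  have h := Finset.card_le_card_of_injOn g (fun w _ => hmem w) hinj
  refine le_trans (le_of_eq ?_) h
  simp

/-- strings with boundary conditions and period `s`, `2 ≤ s ≤ m-2`:
at most `2^{s-2}` of them. -/
lemma card_badS_le (m s : ℕ) (hs2 : 2 ≤ s) (hsm : s ≤ m - 2) (hm : 4 ≤ m) :
    (Finset.univ.filter (fun A : Fin m → Bool => bd m A ∧ per A s)).card ≤ 2 ^ (s - 2) := by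
  have hinj : Set.InjOn
      (fun A : Fin m → Bool => (fun k : Fin (s - 2) => A ⟨(k : ℕ) + 2, by omega⟩))
      ↑(Finset.univ.filter (fun A : Fin m → Bool => bd m A ∧ per A s)) := by
    intro A hA B hB hAB
    simp only [Finset.coe_filter, Set.mem_setOf_eq, Finset.mem_univ, true_and] at hA hB
    apply per_ext (by omega : 0 < s) hA.2 hB.2
    intro k hk hks
    rcases Nat.lt_or_ge k 1 with h1 | h1
    · rw [hA.1.1 _ (by omega : k = 0), hB.1.1 _ (by omega : k = 0)]
    rcases Nat.lt_or_ge k 2 with h2 | h2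
    · rw [hA.1.2.1 _ (by omega : k = 1), hB.1.2.1 _ (by omega : k = 1)]
    have hk2 : k - 2 < s - 2 := by omega
    have := congrFun hAB ⟨k - 2, hk2⟩
    simp only at this
    convert this using 2 <;> (ext; simp; omega)
  have h := Finset.card_le_card_of_injOn _ (fun a _ =>
    Finset.mem_univ ((fun A : Fin m → Bool =>
      (fun k : Fin (s - 2) => A ⟨(k : ℕ) + 2, by omega⟩)) a)) hinj
  refine le_trans h (le_of_eq ?_)
  simp

lemma card_badS_one (m : ℕ) (hm : 4 ≤ m) :
    (Finset.univ.filter (fun A : Fin m → Bool => bd m A ∧ per A 1)).card = 0 := by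
  rw [Finset.card_eq_zero, Finset.filter_eq_empty_iff]
  rintro A - ⟨hbd, hper⟩
  have h1 : 1 + (0 : ℕ) < m := by omega
  have := per_apply hper 0 h1
  rw [hbd.1 ⟨0, by omega⟩ rfl, hbd.2.1 ⟨1 + 0, h1⟩ rfl] at this
  simp at this

lemma card_badS_msub2 (m : ℕ) (hm : 4 ≤ m) :
    (Finset.univ.filter (fun A : Fin m → Bool => bd m A ∧ per A (m - 2))).card = 0 := by
  rw [Finset.card_eq_zero, Finset.filter_eq_empty_iff]
  rintro A - ⟨hbd, hper⟩
  have h1 : m - 2 + (1 : ℕ) < m := by omega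
  have := per_apply hper 1 h1
  rw [hbd.2.2.2 ⟨m - 2 + 1, h1⟩ (show m - 2 + 1 = m - 1 by omega), hbd.2.1 ⟨1, by omega⟩ rfl] at this
  simp at this

lemma card_badS_msub3 (m : ℕ) (hm : 6 ≤ m) :
    (Finset.univ.filter (fun A : Fin m → Bool => bd m A ∧ per A (m - 3))).card
      ≤ 2 ^ (m - 6) := by
  have hA2 : ∀ A : Fin m → Bool, bd m A → per A (m - 3) → A ⟨2, by omega⟩ = true := by
    intro A hbd hper
    have h1 : m - 3 + (2 : ℕ) < m := by omega
    have := per_apply hper 2 h1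
    rw [hbd.2.2.2 ⟨m - 3 + 2, h1⟩ (show m - 3 + 2 = m - 1 by omega)] at this
    exact this.symm
  have hinj : Set.InjOn
      (fun A : Fin m → Bool => (fun k : Fin (m - 6) => A ⟨(k : ℕ) + 3, by omega⟩))
      ↑(Finset.univ.filter (fun A : Fin m → Bool => bd m A ∧ per A (m - 3))) := by
    intro A hA B hB hAB
    simp only [Finset.coe_filter, Set.mem_setOf_eq, Finset.mem_univ, true_and] at hA hB
    apply per_ext (by omega : 0 < m - 3) hA.2 hB.2
    intro k hk hks
    rcases Nat.lt_or_ge k 1 with h1 | h1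
    · rw [hA.1.1 _ (by omega : k = 0), hB.1.1 _ (by omega : k = 0)]
    rcases Nat.lt_or_ge k 2 with h2 | h2
    · rw [hA.1.2.1 _ (by omega : k = 1), hB.1.2.1 _ (by omega : k = 1)]
    rcases Nat.lt_or_ge k 3 with h3 | h3
    · have e : (⟨k, hk⟩ : Fin m) = ⟨2, by omega⟩ := by ext; simp; omega
      rw [e, hA2 A hA.1 hA.2, hA2 B hB.1 hB.2]
    have hk3 : k - 3 < m - 6 := by omega
    have := congrFun hAB ⟨k - 3, hk3⟩
    simp only at this
    convert this using 2 <;> (ext; simp; omega)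
  have h := Finset.card_le_card_of_injOn _ (fun a _ =>
    Finset.mem_univ ((fun A : Fin m → Bool =>
      (fun k : Fin (m - 6) => A ⟨(k : ℕ) + 3, by omega⟩)) a)) hinj
  refine le_trans h (le_of_eq ?_)
  simp

lemma sum_pow_two (k : ℕ) : ∑ t ∈ Finset.range k, 2 ^ t = 2 ^ k - 1 := by
  induction k with
  | zero => simp
  | succ k ih =>
    rw [Finset.sum_range_succ, ih, pow_succ]
    have : 1 ≤ 2 ^ k := Nat.one_le_two_pow
    omega

lemma cstar_ge (m : ℕ) (hm : 6 ≤ m) : 2 ^ (m - 6) ≤ cstar m := by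
  classical
  set B := Finset.univ.filter (fun A : Fin m → Bool => bd m A) with hB
  set G := Finset.univ.filter (fun A : Fin m → Bool => csP m A) with hG
  set Bad := Finset.Ioo 0 (m - 1) |>.biUnion
    (fun s => Finset.univ.filter (fun A : Fin m → Bool => bd m A ∧ per A s)) with hBad
  have hcover : B ⊆ G ∪ Bad := by
    intro A hA
    simp only [hB, Finset.mem_filter, Finset.mem_univ, true_and] at hA
    by_cases hc : conway A A = 2 ^ (m - 1) + 1
    · apply Finset.mem_union_left
      simp only [hG, Finset.mem_filter, Finset.mem_univ, true_and]
      exact ⟨hA.1, hA.2.1, hA.2.2.1, hA.2.2.2, hc⟩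
    · apply Finset.mem_union_right
      have h0 : A ⟨0, by omega⟩ = true := hA.1 _ rfl
      have hl : A ⟨m - 1, by omega⟩ = true := hA.2.2.2 _ rfl
      have := (not_iff_not.mpr (conway_eq_iff (by omega) A h0 hl)).mp hc
      push_neg at this
      obtain ⟨s, hs1, hs2, hper⟩ := this
      simp only [hBad, Finset.mem_biUnion]
      exact ⟨s, Finset.mem_Ioo.mpr ⟨hs1, hs2⟩,
        Finset.mem_filter.mpr ⟨Finset.mem_univ _, hA, hper⟩⟩
  have hBadcard : Bad.card ≤ 2 ^ (m - 5) - 1 + 2 ^ (m - 6) := by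
    refine le_trans (Finset.card_biUnion_le) ?_
    have hsplit : Finset.Ioo 0 (m - 1)
        = insert 1 (insert (m - 2) (insert (m - 3) (Finset.Icc 2 (m - 4)))) := by
      ext x
      simp only [Finset.mem_Ioo, Finset.mem_insert, Finset.mem_Icc]
      omega
    rw [hsplit]
    rw [Finset.sum_insert (by simp only [Finset.mem_insert, Finset.mem_Icc]; omega),
        Finset.sum_insert (by simp only [Finset.mem_insert, Finset.mem_Icc]; omega),
        Finset.sum_insert (by simp only [Finset.mem_Icc]; omega)]
    rw [card_badS_one m (by omega), card_badS_msub2 m (by omega)]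
    have h3 := card_badS_msub3 m hm
    have h4 : ∑ s ∈ Finset.Icc 2 (m - 4),
        (Finset.univ.filter (fun A : Fin m → Bool => bd m A ∧ per A s)).card
        ≤ ∑ s ∈ Finset.Icc 2 (m - 4), 2 ^ (s - 2) := by
      apply Finset.sum_le_sum
      intro s hs
      simp only [Finset.mem_Icc] at hs
      exact card_badS_le m s hs.1 (by omega) (by omega)
    have h5 : ∑ s ∈ Finset.Icc 2 (m - 4), 2 ^ (s - 2) = 2 ^ (m - 5) - 1 := by
      rw [show Finset.Icc 2 (m - 4) = Finset.map ⟨fun t => t + 2, add_left_injective 2⟩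
          (Finset.range (m - 5)) from ?_]
      · rw [Finset.sum_map]
        simp only [Function.Embedding.coeFn_mk, Nat.add_sub_cancel]
        exact sum_pow_two (m - 5)
      · ext x
        simp only [Finset.mem_Icc, Finset.mem_map, Finset.mem_range,
          Function.Embedding.coeFn_mk]
        constructor
        · intro h; exact ⟨x - 2, by omega, by show x - 2 + 2 = x; omega⟩
        · rintro ⟨t, ht, rfl⟩
          show 2 ≤ t + 2 ∧ t + 2 ≤ m - 4
          omega
    omega
  have hGB : cstar m = G.card := cstar_eq m
  have hcard : B.card ≤ G.card + Bad.card :=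
    le_trans (Finset.card_le_card hcover) (Finset.card_union_le _ _)
  have hBcard : 2 ^ (m - 4) ≤ B.card := card_bd_ge m (by omega)
  have e1 : 2 ^ (m - 4) = 4 * 2 ^ (m - 6) := by
    rw [show m - 4 = 2 + (m - 6) by omega, pow_add]; norm_num
  have e2 : 2 ^ (m - 5) = 2 * 2 ^ (m - 6) := by
    rw [show m - 5 = 1 + (m - 6) by omega, pow_add]; norm_num
  omega

/-! ### small cases -/

lemma cstar_four : 1 ≤ cstar 4 := by
  rw [cstar]
  exact Fintype.card_pos_iff.mpr
    ⟨⟨![true, false, false, true], by decide, by decide, by decide, by decide, by decide⟩⟩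

lemma cstar_five : 1 ≤ cstar 5 := by
  rw [cstar]
  exact Fintype.card_pos_iff.mpr
    ⟨⟨![true, false, false, false, true], by decide, by decide, by decide, by decide, by decide⟩⟩

/-! ### main theorem -/

/-- For every `n ≥ 5`, `2^{n-6} ≤ c_n ≤ 2^{n-4}`. -/
theorem cn_initial_bounds (n : ℕ) (hn : 5 ≤ n) :
    (2 : ℝ) ^ ((n : ℤ) - 6) ≤ (c n : ℝ) ∧ (c n : ℝ) ≤ (2 : ℝ) ^ ((n : ℤ) - 4) := by
  constructor
  · -- lower bound
    rcases Nat.lt_or_ge n 7 with h7 | h7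
    · -- n = 5 or 6 : c n ≥ 2 and 2^(n-6) ≤ 1 ≤ 2
      have hc2 : 2 ≤ c n := by
        interval_cases n
        · have h1 := cstar_four
          have h2 : c 5 = 2 * cstar 4 := rfl
          omega
        · have h1 := cstar_five
          have h2 : c 6 = 2 * cstar 5 := rfl
          omega
      have h1 : (2 : ℝ) ^ ((n : ℤ) - 6) ≤ 1 := by
        apply zpow_le_one_of_nonpos₀ (by norm_num)
        omega
      have h2 : (1 : ℝ) ≤ (c n : ℝ) := by
        have : (1 : ℕ) ≤ c n := by omega
        exact_mod_cast this
      linarith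
    · have hcs : 2 ^ (n - 7) ≤ cstar (n - 1) := by
        have := cstar_ge (n - 1) (by omega)
        rwa [show n - 1 - 6 = n - 7 by omega] at this
      have hnat : 2 ^ (n - 6) ≤ c n := by
        rw [c, show n - 6 = 1 + (n - 7) by omega, pow_add, pow_one]
        omega
      calc (2 : ℝ) ^ ((n : ℤ) - 6) = ((2 ^ (n - 6) : ℕ) : ℝ) := by
            rw [show (n : ℤ) - 6 = ((n - 6 : ℕ) : ℤ) by omega]
            push_cast [zpow_natCast]
            ring
        _ ≤ (c n : ℝ) := by exact_mod_cast hnat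
  · have hcs : cstar (n - 1) ≤ 2 ^ (n - 5) := by
      have := cstar_le (n - 1) (by omega)
      rwa [show n - 1 - 4 = n - 5 by omega] at this
    have hnat : c n ≤ 2 ^ (n - 4) := by
      rw [c, show n - 4 = 1 + (n - 5) by omega, pow_add, pow_one]
      omega
    calc (c n : ℝ) ≤ ((2 ^ (n - 4) : ℕ) : ℝ) := by exact_mod_cast hnat
      _ = (2 : ℝ) ^ ((n : ℤ) - 4) := by
          rw [show (n : ℤ) - 4 = ((n - 4 : ℕ) : ℤ) by omega]
          push_cast [zpow_natCast]
          ring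
end

section
/- The sequence d_n := c_n / 2^n converges to a limit α as n → ∞; this limit α is strictly positive, and there is a constant K > 0 such that |d_n − α| ≤ K · 2^{−n/2} for all n ≥ 5. -/
/-!
A string has autocorrelation `2^{m-1} + 1` iff it has no border (a proper prefix that is also a
suffix) of length `k` with `2 ≤ k < m`. Forbidding only the borders of length `2 ≤ k ≤ M` is a
condition on the first and last `M` letters, so for `m ≥ 2M` the proportion `a_M` of strings of
length `m` that begin with `HT`, end with `TH` and satisfy it does not depend on `m`. A string
beginning with `HT` that has a border of length `k < m` is determined by its first `m - k` letters,
so there are at most `2^{m-k-2}` of them; summing over `k > M` puts `d_m := c*_m / 2^m` in the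
interval `[a_M - 2^{-M}/4, a_M]` whenever `m ≥ 2M`. Hence `(d_m)` is Cauchy and its limit `α` lies
in the same intervals, which gives both `α ≥ a_3 - 1/32 = 1/64` and the rate `2^{-M}/4` with
`M = ⌊(n - 1)/2⌋`.
-/

namespace PenneyAnte

open Finset

variable {m : ℕ}

-- Positions past the end read as `false`, so indices never need bound proofs.
def bit (A : Fin m → Bool) (i : ℕ) : Bool :=
  if h : i < m then A ⟨i, h⟩ else false

def HasBorder (A : Fin m → Bool) (k : ℕ) : Prop :=
  ∀ j < k, bit A (m - k + j) = bit A j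

instance (A : Fin m → Bool) : DecidablePred (HasBorder A) :=
  fun _ => inferInstanceAs (Decidable (∀ j < _, _))

def IsFramed (A : Fin m → Bool) : Prop :=
  bit A 0 = true ∧ bit A 1 = false ∧ bit A (m - 2) = false ∧ bit A (m - 1) = true

instance : DecidablePred (IsFramed (m := m)) :=
  fun _ => inferInstanceAs (Decidable (_ ∧ _))

def BorderFreeUpTo (M : ℕ) (A : Fin m → Bool) : Prop :=
  ∀ k ≤ M, 2 ≤ k → ¬HasBorder A k

instance (M : ℕ) : DecidablePred (BorderFreeUpTo (m := m) M) :=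
  fun _ => inferInstanceAs (Decidable (∀ k ≤ M, _))

def numBorderFree (m M : ℕ) : ℕ :=
  #{A : Fin m → Bool | IsFramed A ∧ BorderFreeUpTo M A}

theorem bit_of_lt (A : Fin m → Bool) {i : ℕ} (hi : i < m) : bit A i = A ⟨i, hi⟩ := dif_pos hi

theorem bit_val (A : Fin m → Bool) (i : Fin m) : bit A i = A i := bit_of_lt A i.isLt

theorem eq_of_bit_eq {A B : Fin m → Bool} (h : ∀ i < m, bit A i = bit B i) : A = B :=
  funext fun i => by simpa only [bit_val] using h i i.isLt

theorem hasBorder_self (A : Fin m → Bool) : HasBorder A m := by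
  intro j _
  rw [Nat.sub_self, zero_add]

theorem hasBorder_sub_iff (A : Fin m → Bool) (i : Fin m) :
    HasBorder A (m - i) ↔ ∀ j : Fin m, (i : ℕ) + j < m → A (i + j) = A j := by
  have hi := i.isLt
  constructor
  · intro h j hij
    have := h j (by omega)
    rwa [Nat.sub_sub_self hi.le, ← Fin.val_add_eq_of_add_lt hij, bit_val, bit_val] at this
  · intro h j hj
    have hij : (i : ℕ) + j < m := by omega
    have := h ⟨j, by omega⟩ hij
    rw [Nat.sub_sub_self hi.le]
    rwa [← bit_val A, ← bit_val A, Fin.val_add_eq_of_add_lt hij] at this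

theorem conway_self_eq_sum (A : Fin m → Bool) :
    conway A A = ∑ i ∈ range m, if HasBorder A (m - i) then 2 ^ (m - 1 - i) else 0 := by
  rw [Finset.sum_range]
  exact Finset.sum_congr rfl fun i _ => if_congr (hasBorder_sub_iff A i).symm rfl rfl

theorem conway_self_eq_iff (A : Fin m → Bool) (hm : 2 ≤ m) (h : bit A (m - 1) = bit A 0) :
    conway A A = 2 ^ (m - 1) + 1 ↔ BorderFreeUpTo (m - 1) A := by
  obtain ⟨n, rfl⟩ : ∃ n, m = n + 2 := ⟨m - 2, by omega⟩
  have h1 : HasBorder A 1 := by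
    intro j hj
    rwa [Nat.lt_one_iff.1 hj, add_zero]
  rw [conway_self_eq_sum, sum_range_succ, sum_range_succ', Nat.sub_zero,
    show n + 2 - (n + 1) = 1 by omega, if_pos h1, if_pos (hasBorder_self A)]
  simp only [show n + 2 - 1 - (n + 1) = 0 by omega, Nat.sub_zero, pow_zero, add_left_inj,
    Nat.add_eq_right, sum_eq_zero_iff, mem_range, ite_eq_right_iff, BorderFreeUpTo]
  constructor
  · intro h k hk hk2
    simpa [show n + 2 - (n + 1 - k + 1) = k by omega] using h (n + 1 - k) (by omega)
  · intro h i hi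
    exact fun hb => absurd hb (h (n + 2 - (i + 1)) (by omega) (by omega))

theorem forall_eq_imp_iff_bit (A : Fin m → Bool) {t : ℕ} (ht : t < m) (b : Bool) :
    (∀ i : Fin m, (i : ℕ) = t → A i = b) ↔ bit A t = b := by
  rw [bit_of_lt A ht]
  exact ⟨fun h => h _ rfl, fun h i hi => by rwa [show i = ⟨t, ht⟩ from Fin.ext hi]⟩

theorem cstar_eq_numBorderFree (hm : 2 ≤ m) : cstar m = numBorderFree m (m - 1) := by
  rw [cstar, numBorderFree, Fintype.card_subtype]
  refine congrArg card (filter_congr fun A _ => ?_)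
  rw [forall_eq_imp_iff_bit A (by omega), forall_eq_imp_iff_bit A (by omega),
    forall_eq_imp_iff_bit A (by omega), forall_eq_imp_iff_bit A (by omega)]
  exact ⟨fun ⟨h0, h1, h2, h3, hc⟩ =>
      ⟨⟨h0, h1, h2, h3⟩, (conway_self_eq_iff A hm (h3.trans h0.symm)).1 hc⟩,
    fun ⟨⟨h0, h1, h2, h3⟩, hb⟩ =>
      ⟨h0, h1, h2, h3, (conway_self_eq_iff A hm (h3.trans h0.symm)).2 hb⟩⟩

theorem numBorderFree_anti {M M' : ℕ} (h : M ≤ M') : numBorderFree m M' ≤ numBorderFree m M :=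
  card_le_card fun A => by
    simp only [mem_filter, mem_univ, true_and]
    exact fun hA => ⟨hA.1, fun k hk => hA.2 k (by omega)⟩

theorem bit_removeNth_of_lt (A : Fin (m + 1) → Bool) (p : Fin (m + 1)) {x : ℕ} (hx : x < p) :
    bit (Fin.removeNth p A) x = bit A x := by
  have hxm : x < m := by omega
  rw [bit_of_lt _ hxm, bit_of_lt A (by omega), Fin.removeNth_apply,
    Fin.succAbove_of_castSucc_lt _ _ hx]
  rfl

theorem bit_removeNth_of_le (A : Fin (m + 1) → Bool) (p : Fin (m + 1)) {x : ℕ} (hx : p ≤ x) :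
    bit (Fin.removeNth p A) x = bit A (x + 1) := by
  by_cases hxm : x < m
  · rw [bit_of_lt _ hxm, bit_of_lt A (by omega), Fin.removeNth_apply,
      Fin.succAbove_of_le_castSucc _ _ hx]
    rfl
  · rw [bit, bit, dif_neg hxm, dif_neg (by omega)]

theorem hasBorder_removeNth_iff (A : Fin (m + 1) → Bool) (p : Fin (m + 1)) {k : ℕ}
    (hk : k ≤ p) (hp : (p : ℕ) ≤ m - k) : HasBorder (Fin.removeNth p A) k ↔ HasBorder A k := by
  refine forall₂_congr fun j hj => ?_
  rw [bit_removeNth_of_lt A p (x := j) (by omega),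
    bit_removeNth_of_le A p (x := m - k + j) (by omega),
    show m - k + j + 1 = m + 1 - k + j by omega]

theorem isFramed_removeNth_iff (A : Fin (m + 1) → Bool) (p : Fin (m + 1)) (h2 : 2 ≤ (p : ℕ))
    (hp : (p : ℕ) ≤ m - 2) : IsFramed (Fin.removeNth p A) ↔ IsFramed A := by
  rw [IsFramed, IsFramed, bit_removeNth_of_lt A p (x := 0) (by omega),
    bit_removeNth_of_lt A p (x := 1) (by omega), bit_removeNth_of_le A p (x := m - 2) (by omega),
    bit_removeNth_of_le A p (x := m - 1) (by omega),
    show m - 2 + 1 = m + 1 - 2 by omega, show m - 1 + 1 = m + 1 - 1 by omega]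

theorem card_filter_comp_removeNth {α : Type*} [Fintype α] [DecidableEq α] (p : Fin (m + 1))
    (P : (Fin m → α) → Prop) [DecidablePred P] :
    #{A : Fin (m + 1) → α | P (Fin.removeNth p A)} = Fintype.card α * #{B | P B} := by
  rw [← card_univ, ← card_product]
  exact card_equiv (Fin.insertNthEquiv (fun _ => α) p).symm (by simp)

theorem numBorderFree_succ {M : ℕ} (hM : 2 ≤ M) (hm : 2 * M ≤ m) :
    numBorderFree (m + 1) M = 2 * numBorderFree m M := by
  let p : Fin (m + 1) := ⟨M, by omega⟩
  have hfree : ∀ A : Fin (m + 1) → Bool, IsFramed A ∧ BorderFreeUpTo M A ↔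
      IsFramed (Fin.removeNth p A) ∧ BorderFreeUpTo M (Fin.removeNth p A) := by
    intro A
    rw [isFramed_removeNth_iff A p hM (by simp only [p]; omega)]
    refine and_congr_right fun _ => forall₂_congr fun k hk => ?_
    rw [hasBorder_removeNth_iff A p (by simp only [p]; omega) (by simp only [p]; omega)]
  rw [numBorderFree, filter_congr fun A _ => hfree A,
    card_filter_comp_removeNth p (fun B => IsFramed B ∧ BorderFreeUpTo M B), Fintype.card_bool,
    numBorderFree]

theorem numBorderFree_eq_mul_pow {M : ℕ} (hM : 2 ≤ M) (hm : 2 * M ≤ m) :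
    numBorderFree m M = numBorderFree (2 * M) M * 2 ^ (m - 2 * M) := by
  induction m, hm using Nat.le_induction with
  | base => simp
  | succ m hm ih => rw [numBorderFree_succ hM hm, ih, Nat.sub_add_comm hm, pow_succ]; ring

theorem eq_of_hasBorder {A B : Fin m → Bool} {k : ℕ} (hk : k < m) (hA : HasBorder A k)
    (hB : HasBorder B k) (h : ∀ i < m - k, bit A i = bit B i) : A = B := by
  refine eq_of_bit_eq fun i => ?_
  induction i using Nat.strong_induction_on with
  | _ i ih =>
    intro hi
    by_cases hik : i < m - k
    · exact h i hik
    · obtain ⟨j, rfl⟩ : ∃ j, i = m - k + j := ⟨i - (m - k), by omega⟩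
      rw [hA j (by omega), hB j (by omega)]
      exact ih j (by omega) (by omega)

theorem card_hasBorder_le {k : ℕ} (hk : k < m) :
    #{A : Fin m → Bool | bit A 0 = true ∧ bit A 1 = false ∧ HasBorder A k} ≤
      2 ^ (m - k - 2) := by
  calc _ ≤ #(univ : Finset (Fin (m - k - 2) → Bool)) := by
        refine card_le_card_of_injOn (fun A j => bit A (j + 2)) (fun _ _ => mem_univ _) ?_
        intro A hA B hB hAB
        simp only [coe_filter, mem_univ, true_and, Set.mem_ofPred_eq] at hA hB
        refine eq_of_hasBorder hk hA.2.2 hB.2.2 fun i hi => ?_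
        match i with
        | 0 => rw [hA.1, hB.1]
        | 1 => rw [hA.2.1, hB.2.1]
        | i + 2 => exact congrFun hAB ⟨i, by omega⟩
    _ = 2 ^ (m - k - 2) := by simp

theorem numBorderFree_le_succ_add {M : ℕ} (hM : M + 1 < m) :
    numBorderFree m M ≤ numBorderFree m (M + 1) + 2 ^ (m - M - 3) := by
  calc numBorderFree m M
      ≤ #(({A : Fin m → Bool | IsFramed A ∧ BorderFreeUpTo (M + 1) A} : Finset _) ∪
          ({A | bit A 0 = true ∧ bit A 1 = false ∧ HasBorder A (M + 1)} : Finset _)) := by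
        refine card_le_card fun A hA => ?_
        simp only [mem_filter, mem_univ, true_and, mem_union] at hA ⊢
        by_cases hb : HasBorder A (M + 1)
        · exact Or.inr ⟨hA.1.1, hA.1.2.1, hb⟩
        · refine Or.inl ⟨hA.1, fun k hk hk2 => ?_⟩
          rcases Nat.le_succ_iff.1 hk with hk | rfl
          exacts [hA.2 k hk hk2, hb]
    _ ≤ numBorderFree m (M + 1) + 2 ^ (m - (M + 1) - 2) := (card_union_le _ _).trans
        (Nat.add_le_add_left (card_hasBorder_le hM) _)
    _ = numBorderFree m (M + 1) + 2 ^ (m - M - 3) := by rw [Nat.sub_sub, Nat.sub_sub]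

theorem numBorderFree_le_add {M : ℕ} (hM : M + 2 ≤ m) :
    numBorderFree m M ≤ numBorderFree m (m - 1) + 2 ^ (m - M - 2) := by
  obtain ⟨hm, hM'⟩ : 2 ≤ m ∧ M ≤ m - 2 := ⟨by omega, by omega⟩
  clear hM
  induction hM' using Nat.decreasingInduction with
  | self =>
    have := numBorderFree_le_succ_add (m := m) (M := m - 2) (by omega)
    rwa [show m - 2 + 1 = m - 1 by omega,
      show m - (m - 2) - 3 = m - (m - 2) - 2 by omega] at this
  | of_succ k hk ih =>
    calc numBorderFree m k ≤ numBorderFree m (k + 1) + 2 ^ (m - k - 3) :=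
          numBorderFree_le_succ_add (by omega)
      _ ≤ numBorderFree m (m - 1) + 2 ^ (m - k - 3) + 2 ^ (m - k - 3) := by
        rw [show m - (k + 1) - 2 = m - k - 3 by omega] at ih; gcongr
      _ = numBorderFree m (m - 1) + 2 ^ (m - k - 2) := by
        rw [add_assoc, ← two_mul, ← pow_succ', show m - k - 3 + 1 = m - k - 2 by omega]

section Sandwich

open Filter Set Topology

variable {d a ε : ℕ → ℝ} {N : ℕ → ℕ} {M₀ : ℕ}

theorem cauchySeq_of_forall_mem_Icc (h : ∀ M ≥ M₀, ∀ m ≥ N M, d m ∈ Icc (a M - ε M) (a M))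
    (hε : Tendsto ε atTop (𝓝 0)) : CauchySeq d := by
  rw [Metric.cauchySeq_iff']
  intro δ hδ
  obtain ⟨M, hεM, hM⟩ := ((hε.eventually (gt_mem_nhds hδ)).and (eventually_ge_atTop M₀)).exists
  refine ⟨N M, fun m hm => ?_⟩
  calc dist (d m) (d (N M)) ≤ a M - (a M - ε M) :=
        Real.dist_le_of_mem_Icc (h M hM m hm) (h M hM _ le_rfl)
    _ < δ := by linarith

theorem mem_Icc_of_tendsto (h : ∀ M ≥ M₀, ∀ m ≥ N M, d m ∈ Icc (a M - ε M) (a M)) {α : ℝ}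
    (hd : Tendsto d atTop (𝓝 α)) {M : ℕ} (hM : M₀ ≤ M) : α ∈ Icc (a M - ε M) (a M) :=
  isClosed_Icc.mem_of_tendsto hd (eventually_atTop.2 ⟨N M, h M hM⟩)

end Sandwich

noncomputable def borderFreeDensity (M : ℕ) : ℝ :=
  (numBorderFree (2 * M) M : ℝ) / 2 ^ (2 * M)

theorem numBorderFree_div_pow {M : ℕ} (hM : 2 ≤ M) (hm : 2 * M ≤ m) :
    (numBorderFree m M : ℝ) / 2 ^ m = borderFreeDensity M := by
  rw [numBorderFree_eq_mul_pow hM hm, borderFreeDensity, ← Nat.add_sub_of_le hm, pow_add,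
    Nat.add_sub_cancel_left]
  push_cast
  exact mul_div_mul_right _ _ (by positivity)

theorem cstar_div_pow_mem_Icc : ∀ M ≥ 2, ∀ m ≥ 2 * M,
    (cstar m : ℝ) / 2 ^ m ∈
      Set.Icc (borderFreeDensity M - (1 / 2) ^ M / 4) (borderFreeDensity M) := by
  intro M hM m hm
  have hle : (cstar m : ℝ) ≤ numBorderFree m M := by
    rw [cstar_eq_numBorderFree (by omega)]; exact_mod_cast numBorderFree_anti (by omega)
  have hge : (numBorderFree m M : ℝ) ≤ cstar m + 2 ^ (m - M - 2) := by
    rw [cstar_eq_numBorderFree (by omega)]; exact_mod_cast numBorderFree_le_add (by omega)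
  have herr : (2 : ℝ) ^ (m - M - 2) / 2 ^ m = (1 / 2) ^ M / 4 := by
    rw [show (2 : ℝ) ^ m = 2 ^ (m - M - 2) * 2 ^ (M + 2) by rw [← pow_add]; congr 1; omega]
    rw [one_div, inv_pow, pow_add]
    field_simp
    norm_num
  rw [← numBorderFree_div_pow hM hm, ← herr, ← sub_div]
  constructor <;> gcongr
  linarith

theorem numBorderFree_six_three : numBorderFree 6 3 = 3 := by decide

theorem c_div_two_pow {n : ℕ} (hn : 1 ≤ n) :
    (c n : ℝ) / 2 ^ n = (cstar (n - 1) : ℝ) / 2 ^ (n - 1) := by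
  rw [c, Nat.cast_mul, ← Nat.sub_add_cancel hn, pow_succ, Nat.add_sub_cancel]
  push_cast
  ring

theorem half_pow_div_four_le {n M : ℕ} (h : n ≤ 2 * M + 2) :
    (1 / 2 : ℝ) ^ M / 4 ≤ 1 / 2 * 2 ^ (-(n : ℝ) / 2) := by
  have hn : (n : ℝ) ≤ 2 * M + 2 := by exact_mod_cast h
  have : (1 / 2 : ℝ) ^ M ≤ 2 ^ (1 + -(n : ℝ) / 2) := by
    rw [one_div, inv_pow, ← Real.rpow_natCast, ← Real.rpow_neg (by norm_num)]
    exact Real.rpow_le_rpow_of_exponent_le (by norm_num) (by linarith)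
  rw [Real.rpow_add (by norm_num), Real.rpow_one] at this
  linarith

end PenneyAnte

open PenneyAnte

open Filter in
/-- The sequence `d_n = c_n / 2^n` converges to a strictly positive limit `α`, and
`|d_n - α| ≤ K · 2^{-n/2}` for all `n ≥ 5`, for some constant `K > 0`. -/
theorem dn_convergence :
    ∃ α : ℝ, 0 < α ∧
      Tendsto (fun n : ℕ => (c n : ℝ) / 2 ^ n) atTop (nhds α) ∧
      ∃ K : ℝ, 0 < K ∧ ∀ n : ℕ, 5 ≤ n →
        |(c n : ℝ) / 2 ^ n - α| ≤ K * (2 : ℝ) ^ (-(n : ℝ) / 2) := by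
  have hIcc := cstar_div_pow_mem_Icc
  have hε : Tendsto (fun M : ℕ => (1 / 2 : ℝ) ^ M / 4) atTop (nhds 0) := by
    simpa using (tendsto_pow_atTop_nhds_zero_of_lt_one (r := (1 / 2 : ℝ))
      (by norm_num) (by norm_num)).div_const 4
  obtain ⟨α, hα⟩ := cauchySeq_tendsto_of_complete (cauchySeq_of_forall_mem_Icc hIcc hε)
  refine ⟨α, ?_, ?_, 1 / 2, by norm_num, fun n hn => ?_⟩
  · have h3 := (mem_Icc_of_tendsto hIcc hα (M := 3) (by norm_num)).1
    rw [borderFreeDensity, numBorderFree_six_three] at h3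
    norm_num at h3
    linarith
  · refine (hα.comp (tendsto_sub_atTop_nat 1)).congr' ?_
    filter_upwards [eventually_ge_atTop 1] with n hn
    exact (c_div_two_pow hn).symm
  · rw [c_div_two_pow (by omega), ← Real.dist_eq]
    calc _ ≤ _ := Real.dist_le_of_mem_Icc (hIcc ((n - 1) / 2) (by omega) (n - 1) (by omega))
          (mem_Icc_of_tendsto hIcc hα (by omega))
      _ = (1 / 2) ^ ((n - 1) / 2) / 4 := sub_sub_cancel _ _
      _ ≤ _ := half_pow_div_four_le (by omega)
end
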